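/- A set X ⊆ Q_n is a rigid, maximally diameter-r subset of Q_n if and only if for every m ≥ 1 and every q ∈ Q_m, the set X × {q} is a rigid, maximally diameter-r subset of Q_{n+m}. -/
import Mathlib


/-- Diameter of a finite subset of the hypercube, w.r.t. Hamming distance. -/
def hDiam {n : ℕ} (A : Finset (Fin n → ℤ)) : ℕ :=
  A.sup fun x => A.sup fun y => hammingDist x y

/-- `A` is maximally diameter-`r` in `Q_n`: its diameter is `r` and adding any
point of the hypercube not in `A` increases the diameter. -/
def IsMaxDiam {n : ℕ} (A : Finset (Fin n → ℤ)) (r : ℕ) : Prop :=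
  hDiam A = r ∧
    ∀ y : Fin n → ℤ, (∀ i, y i = 1 ∨ y i = -1) → y ∉ A → ∃ a ∈ A, r < hammingDist y a

/-- `A` is rigid: every point of `A` realizes the diameter. -/
def IsRigid {n : ℕ} (A : Finset (Fin n → ℤ)) : Prop :=
  ∀ a ∈ A, (A.sup fun x => hammingDist x a) = hDiam A

lemma hammingDist_append {n m : ℕ} (a c : Fin n → ℤ) (b d : Fin m → ℤ) :
    hammingDist (Fin.append a b) (Fin.append c d) = hammingDist a c + hammingDist b d := by
  classical
  simp only [hammingDist, Finset.card_filter]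
  rw [Fin.sum_univ_add]
  simp [Fin.append_left, Fin.append_right]

lemma append_inj {n m : ℕ} (q : Fin m → ℤ) :
    Function.Injective (fun x : Fin n → ℤ => Fin.append x q) := by
  intro x y h
  funext i
  have := congrFun h (Fin.castAdd m i)
  simpa [Fin.append_left] using this

theorem stmt_9 (n r : ℕ) (X : Finset (Fin n → ℤ))
    (hQ : ∀ x ∈ X, ∀ i, x i = 1 ∨ x i = -1) (hne : X.Nonempty) :
    (IsMaxDiam X r ∧ IsRigid X) ↔
      ∀ m : ℕ, 1 ≤ m → ∀ q : Fin m → ℤ, (∀ i, q i = 1 ∨ q i = -1) →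
        IsMaxDiam (X.image fun x => Fin.append x q) r ∧
          IsRigid (X.image fun x => Fin.append x q) := by
  classical
  have key : ∀ m : ℕ, ∀ q : Fin m → ℤ, ∀ (a : Fin n → ℤ),
      ((X.image fun x => Fin.append x q).sup fun x => hammingDist x (Fin.append a q))
        = X.sup fun x => hammingDist x a := by
    intro m q a
    rw [Finset.sup_image]
    apply Finset.sup_congr rfl
    intro x _
    simp [Function.comp, hammingDist_append]
  have hdiam : ∀ m : ℕ, ∀ q : Fin m → ℤ,
      hDiam (X.image fun x => Fin.append x q) = hDiam X := by
    intro m q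
    unfold hDiam
    rw [Finset.sup_image]
    apply Finset.sup_congr rfl
    intro a _
    simp only [Function.comp_apply]
    rw [Finset.sup_image]
    apply Finset.sup_congr rfl
    intro y _
    simp [Function.comp, hammingDist_append]
  constructor
  · rintro ⟨⟨hd, hmax⟩, hrig⟩ m hm q hq
    refine ⟨⟨by rw [hdiam m q, hd], ?_⟩, ?_⟩
    · intro y hy hyn
      set y₁ : Fin n → ℤ := fun i => y (Fin.castAdd m i) with hy₁
      set y₂ : Fin m → ℤ := fun i => y (Fin.natAdd n i) with hy₂
      have hsplit : Fin.append y₁ y₂ = y := Fin.append_castAdd_natAdd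
      by_cases hmem : y₁ ∈ X
      · have hne2 : y₂ ≠ q := by
          intro hqe
          apply hyn
          refine Finset.mem_image.2 ⟨y₁, hmem, ?_⟩
          rw [← hqe, hsplit]
        obtain ⟨a, ha, hsup⟩ := Finset.exists_mem_eq_sup X hne
          (fun x => hammingDist x y₁)
        have hr : hammingDist a y₁ = r := by
          rw [← hsup, hrig y₁ hmem, hd]
        refine ⟨Fin.append a q, Finset.mem_image_of_mem _ ha, ?_⟩
        rw [← hsplit, hammingDist_comm, hammingDist_append, hr]
        have : 0 < hammingDist q y₂ := hammingDist_pos.2 (Ne.symm hne2)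
        omega
      · obtain ⟨a, ha, hlt⟩ := hmax y₁ (fun i => hy (Fin.castAdd m i)) hmem
        refine ⟨Fin.append a q, Finset.mem_image_of_mem _ ha, ?_⟩
        rw [← hsplit, hammingDist_append]
        omega
    · intro b hb
      obtain ⟨a, ha, rfl⟩ := Finset.mem_image.1 hb
      rw [key m q a, hrig a ha, hdiam m q]
  · intro h
    have hq1 : ∀ i : Fin 1, (fun _ : Fin 1 => (1 : ℤ)) i = 1 ∨
        (fun _ : Fin 1 => (1 : ℤ)) i = -1 := fun _ => Or.inl rfl
    obtain ⟨⟨hd, hmax⟩, hrig⟩ := h 1 le_rfl (fun _ => 1) hq1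
    set q : Fin 1 → ℤ := fun _ => 1
    have hdX : hDiam X = r := by rw [← hdiam 1 q]; exact hd
    refine ⟨⟨hdX, ?_⟩, ?_⟩
    · intro y hy hyn
      have hy' : ∀ i : Fin (n + 1), Fin.append y q i = 1 ∨ Fin.append y q i = -1 := by
        refine Fin.addCases (fun i => ?_) (fun i => ?_)
        · rw [Fin.append_left]; exact hy i
        · rw [Fin.append_right]; exact Or.inl rfl
      have hyn' : Fin.append y q ∉ X.image fun x => Fin.append x q := by
        intro hc
        obtain ⟨x, hx, hxe⟩ := Finset.mem_image.1 hc
        exact hyn ((append_inj q hxe) ▸ hx)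
      obtain ⟨b, hb, hlt⟩ := hmax (Fin.append y q) hy' hyn'
      obtain ⟨a, ha, rfl⟩ := Finset.mem_image.1 hb
      refine ⟨a, ha, ?_⟩
      rwa [hammingDist_append, hammingDist_self, Nat.add_zero] at hlt
    · intro a ha
      rw [← key 1 q a, hrig (Fin.append a q) (Finset.mem_image_of_mem _ ha),
        hdiam 1 q]
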